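/- Let N be a real number and let D_N, D_N*, L_N be the Dirac-monopole operators on smooth functions ψ : ℂ → ℂ. Then the intertwining relations L_{N+1}(D_N ψ) = D_N(L_N ψ) and L_N(D_N* ψ) = D_N*(L_{N+1} ψ) hold for every smooth ψ : ℂ → ℂ. -/

import Mathlib

/-!
Both relations come from the supersymmetric factorisations
`L_N = D_N* D_N + N(N+1)` and `L_{N+1} = D_N D_N* + N(N+1)`:
then `L_{N+1} D_N = D_N D_N* D_N + N(N+1) D_N = D_N L_N`, and likewise for `D_N*`.
The factorisations are Leibniz-rule computations with `∂(1+|z|²) = z̄` and `∂̄(1+|z|²) = z`;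
the second one also needs `∂∂̄ = ∂̄∂`, i.e. the symmetry of second derivatives.
-/

open Complex ComplexConjugate MeasureTheory

noncomputable section

/-- Partial derivative in the x-direction (identifying ℂ with ℝ²). -/
def pdx (f : ℂ → ℂ) (z : ℂ) : ℂ := fderiv ℝ f z 1

/-- Partial derivative in the y-direction. -/
def pdy (f : ℂ → ℂ) (z : ℂ) : ℂ := fderiv ℝ f z Complex.I

/-- Wirtinger derivative ∂ = (∂ₓ - i ∂_y)/2. -/
def wd (f : ℂ → ℂ) (z : ℂ) : ℂ := (pdx f z - Complex.I * pdy f z) / 2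

/-- Wirtinger derivative ∂̄ = (∂ₓ + i ∂_y)/2. -/
def wdb (f : ℂ → ℂ) (z : ℂ) : ℂ := (pdx f z + Complex.I * pdy f z) / 2

@[fun_prop]
theorem Complex.contDiff_conj {n : WithTop ℕ∞} : ContDiff ℝ n (conj : ℂ → ℂ) :=
  conjCLE.contDiff

theorem Complex.fderiv_conj (z : ℂ) : fderiv ℝ (conj : ℂ → ℂ) z = conjCLE :=
  conjCLE.fderiv

section Wirtinger

variable {f g : ℂ → ℂ} {z c : ℂ} {m n : WithTop ℕ∞}

theorem wd_add (hf : DifferentiableAt ℝ f z) (hg : DifferentiableAt ℝ g z) :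
    wd (fun w => f w + g w) z = wd f z + wd g z := by
  simp only [wd, pdx, pdy, fderiv_fun_add hf hg, add_apply]
  ring

theorem wdb_add (hf : DifferentiableAt ℝ f z) (hg : DifferentiableAt ℝ g z) :
    wdb (fun w => f w + g w) z = wdb f z + wdb g z := by
  simp only [wdb, pdx, pdy, fderiv_fun_add hf hg, add_apply]
  ring

theorem wd_mul (hf : DifferentiableAt ℝ f z) (hg : DifferentiableAt ℝ g z) :
    wd (fun w => f w * g w) z = wd f z * g z + f z * wd g z := by
  simp only [wd, pdx, pdy, fderiv_fun_mul hf hg, add_apply, smul_apply, smul_eq_mul]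
  ring

theorem wdb_mul (hf : DifferentiableAt ℝ f z) (hg : DifferentiableAt ℝ g z) :
    wdb (fun w => f w * g w) z = wdb f z * g z + f z * wdb g z := by
  simp only [wdb, pdx, pdy, fderiv_fun_mul hf hg, add_apply, smul_apply, smul_eq_mul]
  ring

theorem wdb_neg : wdb (fun w => -f w) z = -wdb f z := by
  simp only [wdb, pdx, pdy, fderiv_fun_neg, neg_apply]
  ring

theorem wd_const : wd (fun _ => c) z = 0 := by simp [wd, pdx, pdy]

theorem wdb_const : wdb (fun _ => c) z = 0 := by simp [wdb, pdx, pdy]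

theorem wd_id : wd (fun w => w) z = 1 := by simp [wd, pdx, pdy]

theorem wdb_id : wdb (fun w => w) z = 0 := by simp [wdb, pdx, pdy]

theorem wd_conj : wd (fun w => conj w) z = 0 := by simp [wd, pdx, pdy, Complex.fderiv_conj]

theorem wdb_conj : wdb (fun w => conj w) z = 1 := by simp [wdb, pdx, pdy, Complex.fderiv_conj]

theorem ContDiff.wd (hf : ContDiff ℝ n f) (hmn : m + 1 ≤ n) : ContDiff ℝ m (wd f) := by
  have := hf.fderiv_right hmn
  unfold _root_.wd pdx pdy
  fun_prop

theorem ContDiff.wdb (hf : ContDiff ℝ n f) (hmn : m + 1 ≤ n) : ContDiff ℝ m (wdb f) := by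
  have := hf.fderiv_right hmn
  unfold _root_.wdb pdx pdy
  fun_prop

theorem wd_wdb_comm (hf : ContDiff ℝ 2 f) (z : ℂ) : wd (wdb f) z = wdb (wd f) z := by
  have hD : Differentiable ℝ (fderiv ℝ f) :=
    (hf.fderiv_right (m := 1) le_rfl).differentiable one_ne_zero
  have hsymm : fderiv ℝ (fderiv ℝ f) z 1 I = fderiv ℝ (fderiv ℝ f) z I 1 :=
    hf.contDiffAt.isSymmSndFDerivAt (by simp) 1 I
  have hwd : wd f = fun y => (fderiv ℝ f y 1 - I * fderiv ℝ f y I) * 2⁻¹ :=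
    funext fun _ => div_eq_mul_inv _ _
  have hwdb : wdb f = fun y => (fderiv ℝ f y 1 + I * fderiv ℝ f y I) * 2⁻¹ :=
    funext fun _ => div_eq_mul_inv _ _
  rw [hwd, hwdb]
  simp (disch := fun_prop) only [wd, wdb, pdx, pdy, fderiv_mul_const, fderiv_fun_add,
    fderiv_fun_sub, fderiv_const_mul, fderiv_clm_apply, fderiv_fun_const, Pi.zero_apply,
    ContinuousLinearMap.comp_zero, zero_add, add_apply, sub_apply, smul_apply,
    ContinuousLinearMap.flip_apply, smul_eq_mul, hsymm]
  ring

end Wirtinger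

/-- Lowering operator D_N ψ = (1+|z|²)∂̄ψ + Nzψ. -/
def DN (N : ℝ) (ψ : ℂ → ℂ) (z : ℂ) : ℂ :=
  (1 + z * conj z) * wdb ψ z + (N : ℂ) * z * ψ z

/-- Raising operator D_N* ψ = -(1+|z|²)∂ψ + (N+1)z̄ψ. -/
def DNs (N : ℝ) (ψ : ℂ → ℂ) (z : ℂ) : ℂ :=
  -(1 + z * conj z) * wd ψ z + ((N : ℂ) + 1) * conj z * ψ z

/-- Dirac monopole operator
L_N ψ = -(1+|z|²)²∂∂̄ψ - Nz(1+|z|²)∂ψ + Nz̄(1+|z|²)∂̄ψ + N²(1+|z|²)ψ. -/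
def LN (N : ℝ) (ψ : ℂ → ℂ) (z : ℂ) : ℂ :=
  -(1 + z * conj z)^2 * wd (wdb ψ) z
    - (N : ℂ) * z * (1 + z * conj z) * wd ψ z
    + (N : ℂ) * conj z * (1 + z * conj z) * wdb ψ z
    + (N : ℂ)^2 * (1 + z * conj z) * ψ z

section Monopole

variable {N : ℝ} {ψ f g : ℂ → ℂ} {z c : ℂ} {m n : WithTop ℕ∞}

theorem ContDiff.DN (hψ : ContDiff ℝ n ψ) (hmn : m + 1 ≤ n) : ContDiff ℝ m (DN N ψ) := by
  have := hψ.wdb hmn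
  have := hψ.of_le (le_self_add.trans hmn)
  unfold _root_.DN
  fun_prop

theorem ContDiff.DNs (hψ : ContDiff ℝ n ψ) (hmn : m + 1 ≤ n) : ContDiff ℝ m (DNs N ψ) := by
  have := hψ.wd hmn
  have := hψ.of_le (le_self_add.trans hmn)
  unfold _root_.DNs
  fun_prop

theorem DN_add_const_mul (hf : DifferentiableAt ℝ f z) (hg : DifferentiableAt ℝ g z) :
    DN N (fun w => f w + c * g w) z = DN N f z + c * DN N g z := by
  simp (disch := fun_prop) only [DN, wdb_add, wdb_mul, wdb_const]
  ring

theorem DNs_add_const_mul (hf : DifferentiableAt ℝ f z) (hg : DifferentiableAt ℝ g z) :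
    DNs N (fun w => f w + c * g w) z = DNs N f z + c * DNs N g z := by
  simp (disch := fun_prop) only [DNs, wd_add, wd_mul, wd_const]
  ring

theorem LN_eq_DNs_DN (hψ : ContDiff ℝ 2 ψ) (z : ℂ) :
    LN N ψ z = DNs N (DN N ψ) z + N * (N + 1) * ψ z := by
  have := hψ.differentiable two_ne_zero
  have := (hψ.wdb (m := 1) le_rfl).differentiable one_ne_zero
  unfold DNs DN
  -- `mul_assoc` first, so that simp does not eta-reduce `fun w => N * w` out of reach of `wd_mul`
  simp (disch := fun_prop) only [LN, mul_assoc, wd_add, wd_mul, wd_const, wd_id, wd_conj]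
  ring

theorem LN_add_one_eq_DN_DNs (hψ : ContDiff ℝ 2 ψ) (z : ℂ) :
    LN (N + 1) ψ z = DN N (DNs N ψ) z + N * (N + 1) * ψ z := by
  have := hψ.differentiable two_ne_zero
  have := (hψ.wd (m := 1) le_rfl).differentiable one_ne_zero
  unfold DN DNs
  simp (disch := fun_prop) only [LN, wdb_add, wdb_mul, wdb_neg, wdb_const, wdb_id, wdb_conj,
    wd_wdb_comm hψ]
  push_cast
  ring

end Monopole

/-- the intertwining relations L_{N+1}D_N = D_N L_N and
L_N D_N* = D_N* L_{N+1}. -/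
theorem monopole_intertwining (N : ℝ) (ψ : ℂ → ℂ) (hψ : ContDiff ℝ (⊤ : ℕ∞) ψ) :
    ∀ z : ℂ,
      LN (N + 1) (fun w => DN N ψ w) z = DN N (fun w => LN N ψ w) z ∧
      LN N (fun w => DNs N ψ w) z = DNs N (fun w => LN (N + 1) ψ w) z := by
  intro z
  have hsmooth : ((⊤ : ℕ∞) : WithTop ℕ∞) + 1 ≤ (⊤ : ℕ∞) := by simp
  have hC2 : (2 : WithTop ℕ∞) ≤ (⊤ : ℕ∞) := WithTop.coe_le_coe.mpr le_top
  have hD : ContDiff ℝ (⊤ : ℕ∞) (DN N ψ) := hψ.DN hsmooth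
  have hDs : ContDiff ℝ (⊤ : ℕ∞) (DNs N ψ) := hψ.DNs hsmooth
  have hψ1 : Differentiable ℝ ψ := hψ.differentiable (by simp)
  constructor
  · simp only [LN_add_one_eq_DN_DNs (hD.of_le hC2), LN_eq_DNs_DN (hψ.of_le hC2)]
    rw [DN_add_const_mul ((hD.DNs hsmooth).differentiable (by simp) z) (hψ1 z)]
  · simp only [LN_eq_DNs_DN (hDs.of_le hC2), LN_add_one_eq_DN_DNs (hψ.of_le hC2)]
    rw [DNs_add_const_mul ((hDs.DN hsmooth).differentiable (by simp) z) (hψ1 z)]
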